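/- For any ξ ∈ ℝⁿ \ {0} and any measurable kernel K : ℝⁿ → ℝ satisfying K(y) ≥ (2-σ)λ/|y|^{n+σ} for all y ≠ 0, with 0 < σ < 2 and λ > 0, the symbol s(ξ) = ∫_{ℝⁿ} 2(1 - cos(y·ξ)) K(y) dy satisfies s(ξ) ≥ c|ξ|^σ for a constant c > 0 depending only on n, λ (and uniform for σ in a compact subinterval of (0,2)). -/

import Mathlib

/-!
For a kernel `K y ≥ b ‖y‖^{-p}` with `p ≥ 0`: on the ball of radius `(8‖ξ‖)⁻¹` around
`ξ / (2‖ξ‖²)` the phase `⟪y, ξ⟫` stays in `[3/8, 5/8]` and `‖y‖ < ‖ξ‖⁻¹`, so the integrand is at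
least `2 (1 - cos (3/8)) b ‖ξ‖^p` there. This ball has Haar measure `(8‖ξ‖)^{-n}` times that of
the unit ball, which gives `s(ξ) ≳ ‖ξ‖^{p-n}`. For `(2 - σ) λ ‖y‖^{-n-σ}` with `σ ≤ σ₁`, take
`b = (2 - σ₁) λ`.
-/

open MeasureTheory Metric Module Real Set
open scoped RealInnerProductSpace

section InnerProductSpace

variable {E : Type*} [NormedAddCommGroup E] [InnerProductSpace ℝ E] {ξ y : E}

lemma inner_mem_Icc_of_mem_ball (hξ : ξ ≠ 0)
    (hy : y ∈ ball ((2 * ‖ξ‖ ^ 2)⁻¹ • ξ) (8 * ‖ξ‖)⁻¹) :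
    ⟪y, ξ⟫ ∈ Icc (3 / 8 : ℝ) (5 / 8) := by
  have hξ' : 0 < ‖ξ‖ := norm_pos_iff.2 hξ
  have hcenter : ⟪(2 * ‖ξ‖ ^ 2)⁻¹ • ξ, ξ⟫ = 1 / 2 := by
    rw [real_inner_smul_left, real_inner_self_eq_norm_sq]
    field_simp
  have hdev : |⟪y - (2 * ‖ξ‖ ^ 2)⁻¹ • ξ, ξ⟫| ≤ 1 / 8 := calc
    _ ≤ ‖y - (2 * ‖ξ‖ ^ 2)⁻¹ • ξ‖ * ‖ξ‖ := abs_real_inner_le_norm _ _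
    _ ≤ (8 * ‖ξ‖)⁻¹ * ‖ξ‖ := by gcongr; exact (mem_ball_iff_norm.1 hy).le
    _ = 1 / 8 := by field_simp
  rw [inner_sub_left, hcenter, abs_le] at hdev
  constructor <;> linarith [hdev.1, hdev.2]

lemma norm_lt_inv_norm_of_mem_ball (hξ : ξ ≠ 0)
    (hy : y ∈ ball ((2 * ‖ξ‖ ^ 2)⁻¹ • ξ) (8 * ‖ξ‖)⁻¹) : ‖y‖ < ‖ξ‖⁻¹ := by
  have hξ' : 0 < ‖ξ‖ := norm_pos_iff.2 hξ
  calc ‖y‖ < ‖(2 * ‖ξ‖ ^ 2)⁻¹ • ξ‖ + (8 * ‖ξ‖)⁻¹ := norm_lt_of_mem_ball hy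
    _ = 5 / 8 * ‖ξ‖⁻¹ := by
      rw [norm_smul, norm_inv, norm_mul, norm_pow, norm_norm, Real.norm_two]
      field_simp
      ring
    _ < ‖ξ‖⁻¹ := by linarith [inv_pos.2 hξ']

lemma mul_norm_rpow_le_two_mul_one_sub_cos_mul_of_mem_ball {p b : ℝ} (hp : 0 ≤ p) (hb : 0 ≤ b)
    {K : E → ℝ} (hK : ∀ y, y ≠ 0 → b / ‖y‖ ^ p ≤ K y) (hξ : ξ ≠ 0)
    (hy : y ∈ ball ((2 * ‖ξ‖ ^ 2)⁻¹ • ξ) (8 * ‖ξ‖)⁻¹) :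
    2 * (1 - cos (3 / 8)) * (b * ‖ξ‖ ^ p) ≤ 2 * (1 - cos ⟪y, ξ⟫) * K y := by
  obtain ⟨hlo, hhi⟩ := inner_mem_Icc_of_mem_ball hξ hy
  have hy₀ : y ≠ 0 := by
    rintro rfl
    norm_num [inner_zero_left] at hlo
  have hcos : cos ⟪y, ξ⟫ ≤ cos (3 / 8) :=
    cos_le_cos_of_nonneg_of_le_pi (by norm_num) (by linarith [pi_gt_three]) hlo
  have hKy : b * ‖ξ‖ ^ p ≤ K y := calc
    b * ‖ξ‖ ^ p = b / ‖ξ‖⁻¹ ^ p := by rw [inv_rpow (norm_nonneg _), div_inv_eq_mul]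
    _ ≤ b / ‖y‖ ^ p := div_le_div_of_nonneg_left hb (rpow_pos_of_pos (norm_pos_iff.2 hy₀) p)
      (rpow_le_rpow (norm_nonneg _) (norm_lt_inv_norm_of_mem_ball hξ hy).le hp)
    _ ≤ K y := hK y hy₀
  gcongr
  linarith [cos_le_one ⟪y, ξ⟫]

variable [FiniteDimensional ℝ E] [MeasurableSpace E] [BorelSpace E] (μ : Measure E)
  [μ.IsAddHaarMeasure]

theorem ofReal_mul_norm_rpow_le_lintegral_one_sub_cos_mul {p b : ℝ} (hp : 0 ≤ p) (hb : 0 ≤ b)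
    {K : E → ℝ} (hK : ∀ y, y ≠ 0 → b / ‖y‖ ^ p ≤ K y) (hξ : ξ ≠ 0) :
    ENNReal.ofReal (2 * (1 - cos (3 / 8)) * b * μ.real (ball 0 1) / 8 ^ finrank ℝ E *
        ‖ξ‖ ^ (p - finrank ℝ E)) ≤
      ∫⁻ y, ENNReal.ofReal (2 * (1 - cos ⟪y, ξ⟫) * K y) ∂μ := by
  have hξ' : 0 < ‖ξ‖ := norm_pos_iff.2 hξ
  have hcos₀ : 0 ≤ 1 - cos (3 / 8) := sub_nonneg.2 (cos_le_one _)
  set s := ball ((2 * ‖ξ‖ ^ 2)⁻¹ • ξ) (8 * ‖ξ‖)⁻¹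
  have hs : μ s = ENNReal.ofReal ((8 * ‖ξ‖)⁻¹ ^ finrank ℝ E * μ.real (ball 0 1)) := by
    rw [Measure.addHaar_ball_of_pos μ _ (by positivity), ENNReal.ofReal_mul (by positivity),
      ofReal_measureReal]
  calc _ = ENNReal.ofReal (2 * (1 - cos (3 / 8)) * (b * ‖ξ‖ ^ p)) * μ s := by
        rw [hs, ← ENNReal.ofReal_mul (by positivity), rpow_sub hξ', rpow_natCast, inv_pow,
          mul_pow]
        congr 1
        field_simp
    _ = ∫⁻ _ in s, ENNReal.ofReal (2 * (1 - cos (3 / 8)) * (b * ‖ξ‖ ^ p)) ∂μ :=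
        (setLIntegral_const _ _).symm
    _ ≤ ∫⁻ y in s, ENNReal.ofReal (2 * (1 - cos ⟪y, ξ⟫) * K y) ∂μ :=
        setLIntegral_mono' measurableSet_ball fun y hy => ENNReal.ofReal_le_ofReal
          (mul_norm_rpow_le_two_mul_one_sub_cos_mul_of_mem_ball hp hb hK hξ hy)
    _ ≤ _ := setLIntegral_le_lintegral _ _

end InnerProductSpace

theorem symbol_lower_bound_general (n : ℕ) (lam : ℝ) (hlam : 0 < lam)
    (σ₀ σ₁ : ℝ) (h0 : 0 < σ₀) (h1 : σ₁ < 2) :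
    ∃ c : ℝ, 0 < c ∧ ∀ σ : ℝ, σ₀ ≤ σ → σ ≤ σ₁ →
      ∀ K : EuclideanSpace ℝ (Fin n) → ℝ, Measurable K →
      (∀ y : EuclideanSpace ℝ (Fin n), y ≠ 0 →
        0 ≤ K y ∧ (2 - σ) * lam / ‖y‖ ^ ((n : ℝ) + σ) ≤ K y) →
      ∀ ξ : EuclideanSpace ℝ (Fin n), ξ ≠ 0 →
        ENNReal.ofReal (c * ‖ξ‖ ^ σ) ≤
          ∫⁻ y, ENNReal.ofReal (2 * (1 - Real.cos ((inner ℝ y ξ : ℝ))) * K y) := by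
  have hcos : 0 < 1 - cos (3 / 8) := by
    rw [sub_pos, ← cos_zero]
    exact cos_lt_cos_of_nonneg_of_le_pi le_rfl (by linarith [pi_gt_three]) (by norm_num)
  have hball : 0 < volume.real (ball (0 : EuclideanSpace ℝ (Fin n)) 1) :=
    ENNReal.toReal_pos (measure_ball_pos _ _ one_pos).ne' measure_ball_lt_top.ne
  have hb : 0 < (2 - σ₁) * lam := mul_pos (by linarith) hlam
  refine ⟨2 * (1 - cos (3 / 8)) * ((2 - σ₁) * lam) *
      volume.real (ball (0 : EuclideanSpace ℝ (Fin n)) 1) / 8 ^ n, by positivity,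
    fun σ hσ₀ hσ₁ K _ hK ξ hξ => ?_⟩
  have hKb : ∀ y, y ≠ 0 → (2 - σ₁) * lam / ‖y‖ ^ ((n : ℝ) + σ) ≤ K y := fun y hy =>
    (div_le_div_of_nonneg_right (by gcongr) (rpow_nonneg (norm_nonneg y) _)).trans (hK y hy).2
  simpa [finrank_euclideanSpace_fin] using
    ofReal_mul_norm_rpow_le_lintegral_one_sub_cos_mul volume
      (add_nonneg n.cast_nonneg (h0.le.trans hσ₀)) hb.le hKb hξ

/-- lower bound on the symbol: if `K(y) ≥ (2-σ)λ/|y|^{n+σ}` then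
`s(ξ) = ∫ 2(1 - cos(y·ξ)) K(y) dy ≥ c |ξ|^σ` for `ξ ≠ 0`, with `c = c(n, λ) > 0`,
uniformly for `σ` in a compact subinterval `[σ₀, σ₁] ⊂ (0, 2)`. -/
theorem symbol_lower_bound (n : ℕ) (hn : 0 < n) (lam : ℝ) (hlam : 0 < lam)
    (σ₀ σ₁ : ℝ) (h0 : 0 < σ₀) (h01 : σ₀ ≤ σ₁) (h1 : σ₁ < 2) :
    ∃ c : ℝ, 0 < c ∧ ∀ σ : ℝ, σ₀ ≤ σ → σ ≤ σ₁ →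
      ∀ K : EuclideanSpace ℝ (Fin n) → ℝ, Measurable K →
      (∀ y : EuclideanSpace ℝ (Fin n), y ≠ 0 →
        0 ≤ K y ∧ (2 - σ) * lam / ‖y‖ ^ ((n : ℝ) + σ) ≤ K y) →
      ∀ ξ : EuclideanSpace ℝ (Fin n), ξ ≠ 0 →
        ENNReal.ofReal (c * ‖ξ‖ ^ σ) ≤
          ∫⁻ y, ENNReal.ofReal (2 * (1 - Real.cos ((inner ℝ y ξ : ℝ))) * K y) :=
  symbol_lower_bound_general n lam hlam σ₀ σ₁ h0 h1
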